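/- TT-SVD accuracy (Theorem 1, d+1 steps): suppose at each step i = 1,…,k the current remainder Tᵢ satisfies Tᵢ = Φᵢ Tᵢ₊₁ + Eᵢ with Φᵢ having orthonormal columns, ΦᵢᵀEᵢ = 0, and ‖Eᵢ‖_F² = εᵢ²‖Tᵢ‖_F² with εᵢ ≤ ε. Then ‖T₁ − Φ₁Φ₂⋯Φₖ Tₖ₊₁‖_F² ≤ Σᵢ εᵢ²‖Tᵢ‖_F² ≤ ε² k ‖T₁‖_F². -/
import Mathlib


open Matrix

/-- Frobenius norm squared of a real matrix. -/
noncomputable def frobSq {m n : Type*} [Fintype m] [Fintype n] (M : Matrix m n ℝ) : ℝ :=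
  ∑ i, ∑ j, (M i j) ^ 2

/-- The product `Φ 0 * Φ 1 * ⋯ * Φ (k-1)` of a chain of compatible matrices. -/
noncomputable def chainProd (m : ℕ → ℕ)
    (Φ : (i : ℕ) → Matrix (Fin (m i)) (Fin (m (i + 1))) ℝ) :
    (k : ℕ) → Matrix (Fin (m 0)) (Fin (m k)) ℝ
  | 0 => 1
  | (k + 1) => chainProd m Φ k * Φ k

lemma frobSq_nonneg {m n : Type*} [Fintype m] [Fintype n] (M : Matrix m n ℝ) :
    0 ≤ frobSq M := by
  apply Finset.sum_nonneg; intro i _; apply Finset.sum_nonneg; intro j _; positivity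

lemma frobSq_eq_trace {m n : Type*} [Fintype m] [Fintype n] (M : Matrix m n ℝ) :
    frobSq M = (Mᵀ * M).trace := by
  simp only [frobSq, Matrix.trace, Matrix.diag, Matrix.mul_apply, Matrix.transpose_apply, sq]
  exact Finset.sum_comm

lemma pythag {a b c : Type*} [Fintype a] [Fintype b] [DecidableEq b] [Fintype c]
    (Φ : Matrix a b ℝ) (A : Matrix a c ℝ) (B : Matrix b c ℝ)
    (h1 : Φᵀ * Φ = 1) (h2 : Φᵀ * A = 0) :
    frobSq (A + Φ * B) = frobSq A + frobSq B := by
  have hAΦ : Aᵀ * Φ = 0 := by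
    have := congrArg Matrix.transpose h2
    simpa [Matrix.transpose_mul] using this
  rw [frobSq_eq_trace, frobSq_eq_trace, frobSq_eq_trace]
  rw [Matrix.transpose_add, Matrix.add_mul, Matrix.mul_add, Matrix.mul_add,
    Matrix.transpose_mul]
  have e1 : Aᵀ * (Φ * B) = 0 := by rw [← Matrix.mul_assoc, hAΦ, Matrix.zero_mul]
  have e2 : Bᵀ * Φᵀ * A = 0 := by rw [Matrix.mul_assoc, h2, Matrix.mul_zero]
  have e3 : Bᵀ * Φᵀ * (Φ * B) = Bᵀ * B := by
    rw [Matrix.mul_assoc, ← Matrix.mul_assoc Φᵀ, h1, Matrix.one_mul]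
  rw [e1, e2, e3]
  simp [Matrix.trace_add]

lemma chainProd_shift (m : ℕ → ℕ)
    (Φ : (i : ℕ) → Matrix (Fin (m i)) (Fin (m (i + 1))) ℝ) (k : ℕ) :
    chainProd m Φ (k + 1) =
      Φ 0 * chainProd (fun i => m (i + 1)) (fun i => Φ (i + 1)) k := by
  induction k with
  | zero => simp [chainProd]
  | succ k ih =>
      show chainProd m Φ (k + 1) * Φ (k + 1) = _
      rw [ih]
      show _ = Φ 0 * (chainProd (fun i => m (i + 1)) (fun i => Φ (i + 1)) k * Φ (k + 1))
      rw [Matrix.mul_assoc]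

theorem aux : ∀ (k p : ℕ) (m : ℕ → ℕ)
    (T : (i : ℕ) → Matrix (Fin (m i)) (Fin p) ℝ)
    (Φ : (i : ℕ) → Matrix (Fin (m i)) (Fin (m (i + 1))) ℝ)
    (εs : ℕ → ℝ),
    (∀ i < k, (Φ i)ᵀ * Φ i = 1) →
    (∀ i < k, (Φ i)ᵀ * (T i - Φ i * T (i + 1)) = 0) →
    (∀ i < k, frobSq (T i - Φ i * T (i + 1)) = (εs i) ^ 2 * frobSq (T i)) →
    frobSq (T 0 - chainProd m Φ k * T k) ≤ ∑ i ∈ Finset.range k, (εs i) ^ 2 * frobSq (T i) := by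
  intro k
  induction k with
  | zero =>
      intro p m T Φ εs _ _ _
      simp [chainProd, frobSq]
  | succ k ih =>
      intro p m T Φ εs hΦ horth herr
      have IH := ih p (fun i => m (i + 1)) (fun i => T (i + 1)) (fun i => Φ (i + 1))
        (fun i => εs (i + 1))
        (fun i hi => hΦ (i + 1) (by omega))
        (fun i hi => horth (i + 1) (by omega))
        (fun i hi => herr (i + 1) (by omega))
      set P : Matrix (Fin (m 1)) (Fin (m (k + 1))) ℝ :=
        chainProd (fun i => m (i + 1)) (fun i => Φ (i + 1)) k with hP
      have hchain : chainProd m Φ (k + 1) * T (k + 1) = Φ 0 * (P * T (k + 1)) := by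
        rw [chainProd_shift, Matrix.mul_assoc]
      have hdecomp : T 0 - chainProd m Φ (k + 1) * T (k + 1) =
          (T 0 - Φ 0 * T 1) + Φ 0 * (T 1 - P * T (k + 1)) := by
        rw [hchain, Matrix.mul_sub]
        abel
      rw [hdecomp, pythag _ _ _ (hΦ 0 (by omega)) (horth 0 (by omega)),
        herr 0 (by omega), Finset.sum_range_succ']
      have IH' : frobSq (T 1 - P * T (k + 1)) ≤
          ∑ i ∈ Finset.range k, εs (i + 1) ^ 2 * frobSq (T (i + 1)) := IH
      linarith

theorem frobSq_mono : ∀ (k p : ℕ) (m : ℕ → ℕ)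
    (T : (i : ℕ) → Matrix (Fin (m i)) (Fin p) ℝ)
    (Φ : (i : ℕ) → Matrix (Fin (m i)) (Fin (m (i + 1))) ℝ),
    (∀ i < k, (Φ i)ᵀ * Φ i = 1) →
    (∀ i < k, (Φ i)ᵀ * (T i - Φ i * T (i + 1)) = 0) →
    ∀ j ≤ k, frobSq (T j) ≤ frobSq (T 0) := by
  intro k p m T Φ hΦ horth j
  induction j with
  | zero => intro _; exact le_refl _
  | succ j ih =>
      intro hj
      have hjk : j < k := by omega
      have hd : T j = (T j - Φ j * T (j + 1)) + Φ j * T (j + 1) := by abel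
      have := pythag (Φ j) (T j - Φ j * T (j + 1)) (T (j + 1)) (hΦ j hjk) (horth j hjk)
      have hle : frobSq (T (j + 1)) ≤ frobSq (T j) := by
        rw [hd, this]
        have := frobSq_nonneg (T j - Φ j * T (j + 1))
        linarith
      exact le_trans hle (ih (by omega))

/-- TT-SVD accuracy (Theorem 1): if at each step `i` the remainder satisfies
`Tᵢ = Φᵢ Tᵢ₊₁ + Eᵢ` with orthonormal `Φᵢ`, `ΦᵢᵀEᵢ = 0` and
`‖Eᵢ‖_F² = εᵢ²‖Tᵢ‖_F²` with `0 ≤ εᵢ ≤ ε`, then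
`‖T₁ − Φ₁⋯Φₖ Tₖ₊₁‖_F² ≤ Σᵢ εᵢ²‖Tᵢ‖_F² ≤ ε² k ‖T₁‖_F²`. -/
theorem stmt2 (k p : ℕ) (m : ℕ → ℕ)
    (T : (i : ℕ) → Matrix (Fin (m i)) (Fin p) ℝ)
    (Φ : (i : ℕ) → Matrix (Fin (m i)) (Fin (m (i + 1))) ℝ)
    (εs : ℕ → ℝ) (ε : ℝ)
    (hΦ : ∀ i < k, (Φ i)ᵀ * Φ i = 1)
    (horth : ∀ i < k, (Φ i)ᵀ * (T i - Φ i * T (i + 1)) = 0)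
    (herr : ∀ i < k, frobSq (T i - Φ i * T (i + 1)) = (εs i) ^ 2 * frobSq (T i))
    (hεnn : ∀ i < k, 0 ≤ εs i) (hε : ∀ i < k, εs i ≤ ε) :
    frobSq (T 0 - chainProd m Φ k * T k) ≤ ∑ i ∈ Finset.range k, (εs i) ^ 2 * frobSq (T i)
    ∧ ∑ i ∈ Finset.range k, (εs i) ^ 2 * frobSq (T i) ≤ ε ^ 2 * k * frobSq (T 0) := by
  constructor
  · exact aux k p m T Φ εs hΦ horth herr
  · have hmono := frobSq_mono k p m T Φ hΦ horth
    calc ∑ i ∈ Finset.range k, (εs i) ^ 2 * frobSq (T i)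
        ≤ ∑ i ∈ Finset.range k, ε ^ 2 * frobSq (T 0) := by
          apply Finset.sum_le_sum
          intro i hi
          rw [Finset.mem_range] at hi
          apply mul_le_mul
          · exact pow_le_pow_left₀ (hεnn i hi) (hε i hi) 2
          · exact hmono i (le_of_lt hi)
          · exact frobSq_nonneg _
          · positivity
      _ = ε ^ 2 * k * frobSq (T 0) := by
          rw [Finset.sum_const, Finset.card_range]; ring
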